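/- arXiv:2109.14446 — 6 statements merged into one kernel-verified Lean document; each statement's English description precedes it below -/
import Mathlib

section
/- Let n ≥ 2 be an integer and let f : ℝ^{1+n} → ℂ be continuous and compactly supported. Then for every unit vector θ ∈ S^{n-1} and every ξ ∈ ℝ^n, the Fourier transform in the first variable of the light ray transform satisfies the slice identity ∫_{ℝ^n} e^{−2πi y·ξ} Lf(y,θ) dy = 𝓕f(−θ·ξ, ξ). -/
open MeasureTheory Metric
open scoped Real RealInnerProductSpace

/-- The light ray transform on Minkowski space `ℝ^{1+n}`:
`L f (y, θ) = ∫ f(s, y + sθ) ds`. -/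
noncomputable def lightRay {n : ℕ} (f : ℝ × EuclideanSpace ℝ (Fin n) → ℂ)
    (y : EuclideanSpace ℝ (Fin n)) (θ : sphere (0 : EuclideanSpace ℝ (Fin n)) 1) : ℂ :=
  ∫ s : ℝ, f (s, y + s • (θ : EuclideanSpace ℝ (Fin n)))

/-- The Fourier transform on `ℝ^{1+n}`:
`𝓕f(τ,ξ) = ∫ e^{-2πi(tτ + x·ξ)} f(t,x) dt dx`. -/
noncomputable def fourierMink {n : ℕ} (f : ℝ × EuclideanSpace ℝ (Fin n) → ℂ)
    (τ : ℝ) (ξ : EuclideanSpace ℝ (Fin n)) : ℂ :=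
  ∫ p : ℝ × EuclideanSpace ℝ (Fin n),
    Complex.exp (-2 * π * Complex.I * (p.1 * τ + ⟪p.2, ξ⟫)) * f p

set_option maxHeartbeats 1000000

/-- Fourier slice theorem for the light ray transform: the Fourier transform in `y` of
`Lf(·, θ)` is the spacetime Fourier transform of `f` at `(-θ·ξ, ξ)`. -/
theorem fourier_slice_lightRay {n : ℕ} (hn : 2 ≤ n)
    (f : ℝ × EuclideanSpace ℝ (Fin n) → ℂ)
    (hf : Continuous f) (hsupp : HasCompactSupport f)
    (θ : sphere (0 : EuclideanSpace ℝ (Fin n)) 1) (ξ : EuclideanSpace ℝ (Fin n)) :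
    (∫ y : EuclideanSpace ℝ (Fin n),
        Complex.exp (-2 * π * Complex.I * ⟪y, ξ⟫) * lightRay f y θ)
      = fourierMink f (-⟪(θ : EuclideanSpace ℝ (Fin n)), ξ⟫) ξ := by
  let E := EuclideanSpace ℝ (Fin n)
  let θ' : E := (θ : E)
  -- the shear homeomorphism
  let Φ : (E × ℝ) ≃ₜ (ℝ × E) :=
    { toFun := fun p => (p.2, p.1 + p.2 • θ'),
      invFun := fun q => (q.2 - q.1 • θ', q.1),
      left_inv := by intro p; simp,
      right_inv := by intro q; simp,
      continuous_toFun := continuous_snd.prodMk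
        (continuous_fst.add (continuous_snd.smul continuous_const)),
      continuous_invFun := (continuous_snd.sub
        (continuous_fst.smul continuous_const)).prodMk continuous_fst }
  have hΦc : Continuous fun p : E × ℝ => f (p.2, p.1 + p.2 • θ') :=
    hf.comp Φ.continuous
  have hΦs : HasCompactSupport fun p : E × ℝ => f (p.2, p.1 + p.2 • θ') :=
    hsupp.comp_homeomorph Φ
  -- continuous phase factor
  have hec : Continuous fun y : E =>
      Complex.exp (-2 * π * Complex.I * (⟪y, ξ⟫ : ℝ)) :=
    Complex.continuous_exp.comp
      (continuous_const.mul (Complex.continuous_ofReal.comp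
        (continuous_id.inner continuous_const)))
  -- the full integrand on E × ℝ
  have hGc : Continuous fun p : E × ℝ =>
      Complex.exp (-2 * π * Complex.I * (⟪p.1, ξ⟫ : ℝ)) * f (p.2, p.1 + p.2 • θ') :=
    (hec.comp continuous_fst).mul hΦc
  have hGs : HasCompactSupport fun p : E × ℝ =>
      Complex.exp (-2 * π * Complex.I * (⟪p.1, ξ⟫ : ℝ)) * f (p.2, p.1 + p.2 • θ') :=
    hΦs.mul_left
  have hGint : Integrable (fun p : E × ℝ =>
      Complex.exp (-2 * π * Complex.I * (⟪p.1, ξ⟫ : ℝ)) * f (p.2, p.1 + p.2 • θ'))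
      ((volume : Measure E).prod (volume : Measure ℝ)) :=
    hGc.integrable_of_hasCompactSupport hGs
  -- the integrand on ℝ × E for fourierMink
  have hHc : Continuous fun p : ℝ × E =>
      Complex.exp (-2 * π * Complex.I *
        ((p.1 : ℂ) * ((-⟪θ', ξ⟫ : ℝ) : ℂ) + ((⟪p.2, ξ⟫ : ℝ) : ℂ))) * f p := by
    refine Continuous.mul ?_ hf
    refine Complex.continuous_exp.comp (continuous_const.mul (Continuous.add ?_ ?_))
    · exact (Complex.continuous_ofReal.comp continuous_fst).mul continuous_const
    · exact Complex.continuous_ofReal.comp (continuous_snd.inner continuous_const)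
  have hHs : HasCompactSupport fun p : ℝ × E =>
      Complex.exp (-2 * π * Complex.I *
        ((p.1 : ℂ) * ((-⟪θ', ξ⟫ : ℝ) : ℂ) + ((⟪p.2, ξ⟫ : ℝ) : ℂ))) * f p :=
    hsupp.mul_left
  have hHint : Integrable (fun p : ℝ × E =>
      Complex.exp (-2 * π * Complex.I *
        ((p.1 : ℂ) * ((-⟪θ', ξ⟫ : ℝ) : ℂ) + ((⟪p.2, ξ⟫ : ℝ) : ℂ))) * f p)
      ((volume : Measure ℝ).prod (volume : Measure E)) :=
    hHc.integrable_of_hasCompactSupport hHs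
  calc
    (∫ y : E, Complex.exp (-2 * π * Complex.I * (⟪y, ξ⟫ : ℝ)) * lightRay f y θ)
        = ∫ y : E, ∫ s : ℝ,
            Complex.exp (-2 * π * Complex.I * (⟪y, ξ⟫ : ℝ)) * f (s, y + s • θ') := by
          refine integral_congr_ae (Filter.Eventually.of_forall fun y => ?_)
          simp only [lightRay]
          rw [integral_const_mul]
    _ = ∫ s : ℝ, ∫ y : E,
            Complex.exp (-2 * π * Complex.I * (⟪y, ξ⟫ : ℝ)) * f (s, y + s • θ') :=
          integral_integral_swap hGint
    _ = ∫ s : ℝ, ∫ x : E,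
            Complex.exp (-2 * π * Complex.I *
              ((s : ℂ) * ((-⟪θ', ξ⟫ : ℝ) : ℂ) + ((⟪x, ξ⟫ : ℝ) : ℂ))) * f (s, x) := by
          refine integral_congr_ae (Filter.Eventually.of_forall fun s => ?_)
          dsimp only
          rw [← integral_add_right_eq_self (μ := (volume : Measure E))
            (fun x : E =>
              Complex.exp (-2 * π * Complex.I *
                ((s : ℂ) * ((-⟪θ', ξ⟫ : ℝ) : ℂ) + ((⟪x, ξ⟫ : ℝ) : ℂ))) * f (s, x))
            (s • θ')]
          refine integral_congr_ae (Filter.Eventually.of_forall fun y => ?_)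
          dsimp only
          have h1 : ⟪y + s • θ', ξ⟫ = ⟪y, ξ⟫ + s * ⟪θ', ξ⟫ := by
            rw [inner_add_left, real_inner_smul_left]
          have h2 : (-2 * (π : ℂ) * Complex.I *
              ((s : ℂ) * ((-⟪θ', ξ⟫ : ℝ) : ℂ) + ((⟪y + s • θ', ξ⟫ : ℝ) : ℂ)))
              = -2 * (π : ℂ) * Complex.I * ((⟪y, ξ⟫ : ℝ) : ℂ) := by
            rw [h1]; push_cast; ring
          rw [h2]
    _ = fourierMink f (-⟪θ', ξ⟫) ξ := by
          rw [fourierMink]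
          exact (integral_prod _ hHint).symm
end

section
/- Let n ≥ 2 be an integer and let f : ℝ^{1+n} → ℂ be continuous and compactly supported. If Lf(y,θ) = 0 for every (y,θ) ∈ ℝ^n × S^{n-1}, then the Fourier transform 𝓕f(τ,ξ) vanishes at every point (τ,ξ) ∈ ℝ × ℝ^n with |τ| ≤ ‖ξ‖ (i.e. on the closed space-like cone). -/
open MeasureTheory Metric
open scoped Real RealInnerProductSpace

/-- The shear homeomorphism `(t,x) ↦ (t, x + t • θ)`. -/
noncomputable def shearHomeo {n : ℕ} (θ : EuclideanSpace ℝ (Fin n)) :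
    (ℝ × EuclideanSpace ℝ (Fin n)) ≃ₜ (ℝ × EuclideanSpace ℝ (Fin n)) where
  toFun p := (p.1, p.2 + p.1 • θ)
  invFun p := (p.1, p.2 - p.1 • θ)
  left_inv p := by simp
  right_inv p := by simp
  continuous_toFun := by fun_prop
  continuous_invFun := by fun_prop

/-- For `|τ| ≤ ‖ξ‖` and `n ≥ 2` there is a unit vector `θ` with `⟪θ,ξ⟫ = -τ`. -/
theorem exists_unit_inner_eq {n : ℕ} (hn : 2 ≤ n) (τ : ℝ) (ξ : EuclideanSpace ℝ (Fin n))
    (h : |τ| ≤ ‖ξ‖) :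
    ∃ θ : EuclideanSpace ℝ (Fin n), θ ∈ sphere (0 : EuclideanSpace ℝ (Fin n)) 1 ∧ ⟪θ, ξ⟫ = -τ := by
  haveI : Nontrivial (EuclideanSpace ℝ (Fin n)) := by
    apply Module.nontrivial_of_finrank_pos (R := ℝ)
    rw [finrank_euclideanSpace_fin]; omega
  rcases eq_or_ne ξ 0 with rfl | hξ
  · have hτ : τ = 0 := by simpa using h
    obtain ⟨θ, hθ⟩ := (NormedSpace.sphere_nonempty (x := (0:EuclideanSpace ℝ (Fin n)))).mpr
      zero_le_one
    exact ⟨θ, hθ, by simp [hτ]⟩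
  · have hr : (1:Cardinal) < Module.rank ℝ (EuclideanSpace ℝ (Fin n)) := by
      rw [← Module.finrank_eq_rank, finrank_euclideanSpace_fin]
      exact_mod_cast hn.trans_lt' one_lt_two
    have hconn := (isConnected_sphere hr (0 : EuclideanSpace ℝ (Fin n)) zero_le_one).isPreconnected
    have ha : -(‖ξ‖⁻¹ • ξ) ∈ sphere (0 : EuclideanSpace ℝ (Fin n)) 1 := by
      simp [norm_smul, abs_of_nonneg, inv_mul_cancel₀ (norm_ne_zero_iff.mpr hξ)]
    have hb : ‖ξ‖⁻¹ • ξ ∈ sphere (0 : EuclideanSpace ℝ (Fin n)) 1 := by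
      simp [norm_smul, abs_of_nonneg, inv_mul_cancel₀ (norm_ne_zero_iff.mpr hξ)]
    have hcont : ContinuousOn (fun θ : EuclideanSpace ℝ (Fin n) => ⟪θ, ξ⟫) (sphere 0 1) :=
      (continuous_inner.comp (continuous_id.prodMk continuous_const)).continuousOn
    have hmem : -τ ∈ Set.Icc (⟪-(‖ξ‖⁻¹ • ξ), ξ⟫) (⟪‖ξ‖⁻¹ • ξ, ξ⟫) := by
      have : ⟪‖ξ‖⁻¹ • ξ, ξ⟫ = ‖ξ‖ := by
        rw [real_inner_smul_left, real_inner_self_eq_norm_sq]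
        field_simp [norm_ne_zero_iff.mpr hξ]
      rw [inner_neg_left, this]
      constructor <;> [linarith [neg_abs_le τ, abs_le.mp h]; linarith [abs_le.mp h]]
    obtain ⟨θ, hθs, hθ⟩ := hconn.intermediate_value ha hb hcont hmem
    exact ⟨θ, hθs, hθ⟩

/-- If the light ray transform of a continuous compactly supported function vanishes
identically, then its Fourier transform vanishes on the closed space-like cone
`{(τ,ξ) : |τ| ≤ ‖ξ‖}`. -/
theorem fourier_vanishes_on_spacelike_cone {n : ℕ} (hn : 2 ≤ n)
    (f : ℝ × EuclideanSpace ℝ (Fin n) → ℂ)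
    (hf : Continuous f) (hsupp : HasCompactSupport f)
    (hL : ∀ (y : EuclideanSpace ℝ (Fin n)) (θ : sphere (0 : EuclideanSpace ℝ (Fin n)) 1),
      lightRay f y θ = 0) :
    ∀ (τ : ℝ) (ξ : EuclideanSpace ℝ (Fin n)), |τ| ≤ ‖ξ‖ → fourierMink f τ ξ = 0 := by
  intro τ ξ h
  obtain ⟨θ, hθs, hθ⟩ := exists_unit_inner_eq hn τ ξ h
  rw [fourierMink]
  set F : ℝ × EuclideanSpace ℝ (Fin n) → ℂ :=
    fun p => Complex.exp (-2 * π * Complex.I * (p.1 * τ + ⟪p.2, ξ⟫)) * f p with hF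
  have hinner : Continuous fun p : ℝ × EuclideanSpace ℝ (Fin n) => (⟪p.2, ξ⟫ : ℝ) :=
    continuous_inner.comp (continuous_snd.prodMk continuous_const)
  have hcontExp : Continuous fun p : ℝ × EuclideanSpace ℝ (Fin n) =>
      Complex.exp (-2 * π * Complex.I * (p.1 * τ + ⟪p.2, ξ⟫)) :=
    Complex.continuous_exp.comp (continuous_const.mul
      (((Complex.continuous_ofReal.comp continuous_fst).mul continuous_const).add
        (Complex.continuous_ofReal.comp hinner)))
  have hFc : Continuous F := hcontExp.mul hf
  have hFsupp : HasCompactSupport F := hsupp.mul_left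
  have hFint : Integrable F volume := hFc.integrable_of_hasCompactSupport hFsupp
  set G : ℝ → EuclideanSpace ℝ (Fin n) → ℂ := fun t y =>
    Complex.exp (-2 * π * Complex.I * (⟪y, ξ⟫ : ℝ)) * f (t, y + t • θ) with hG
  have hGc : Continuous (Function.uncurry G) := by
    refine Continuous.mul ?_ (hf.comp (shearHomeo θ).continuous)
    exact Complex.continuous_exp.comp (continuous_const.mul
      (Complex.continuous_ofReal.comp hinner))
  have hGsupp : HasCompactSupport (Function.uncurry G) := by
    have h1 : HasCompactSupport (f ∘ (shearHomeo θ)) := hsupp.comp_homeomorph _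
    have h2 : HasCompactSupport fun p : ℝ × EuclideanSpace ℝ (Fin n) =>
        f (p.1, p.2 + p.1 • θ) := h1
    exact h2.mul_left
  have hGint : Integrable (Function.uncurry G) (volume.prod volume) := by
    rw [← Measure.volume_eq_prod]
    exact hGc.integrable_of_hasCompactSupport hGsupp
  have hkey : ∀ (t : ℝ) (y : EuclideanSpace ℝ (Fin n)), F (t, y + t • θ) = G t y := by
    intro t y
    simp only [hF, hG]
    congr 2
    have h3 : ⟪y + t • θ, ξ⟫ = ⟪y, ξ⟫ + t * ⟪θ, ξ⟫ := by
      rw [inner_add_left, real_inner_smul_left]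
    push_cast [h3, hθ]
    ring
  calc ∫ p : ℝ × EuclideanSpace ℝ (Fin n), F p
      = ∫ t : ℝ, ∫ x : EuclideanSpace ℝ (Fin n), F (t, x) := by
        rw [Measure.volume_eq_prod] at hFint ⊢
        exact integral_prod F hFint
    _ = ∫ t : ℝ, ∫ y : EuclideanSpace ℝ (Fin n), G t y := by
        refine integral_congr_ae (Filter.Eventually.of_forall fun t => ?_)
        show (∫ x : EuclideanSpace ℝ (Fin n), F (t, x)) = ∫ y : EuclideanSpace ℝ (Fin n), G t y
        rw [← integral_add_right_eq_self (fun x : EuclideanSpace ℝ (Fin n) => F (t, x)) (t • θ)]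
        exact integral_congr_ae (Filter.Eventually.of_forall fun y => hkey t y)
    _ = ∫ y : EuclideanSpace ℝ (Fin n), ∫ t : ℝ, G t y := integral_integral_swap hGint
    _ = 0 := by
        refine integral_eq_zero_of_ae (Filter.Eventually.of_forall fun y => ?_)
        show (∫ t : ℝ, G t y) = (0 : EuclideanSpace ℝ (Fin n) → ℂ) y
        have h4 : (∫ t : ℝ, G t y)
            = Complex.exp (-2 * π * Complex.I * (⟪y, ξ⟫ : ℝ)) * lightRay f y ⟨θ, hθs⟩ := by
          rw [lightRay, ← integral_const_mul]
        rw [h4, hL y ⟨θ, hθs⟩, mul_zero, Pi.zero_apply]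
end

section
/- Let n ≥ 2 be an integer and let f ∈ L¹(ℝ^{1+n}) be compactly supported. If for every unit vector θ ∈ S^{n-1} the light ray transform Lf(y,θ) = ∫_ℝ f(s, y + sθ) ds vanishes for Lebesgue-almost every y ∈ ℝ^n, then f = 0 almost everywhere. In particular, the light ray transform is injective on compactly supported integrable functions. -/
/-!
Write `f̂(τ, ξ)` for the space-time Fourier transform of `f`. Shearing `(s, y) ↦ (s, y + sθ)` and
Fubini turn the vanishing of the light ray transform in the direction `θ` into `f̂(-⟪θ, ξ⟫, ξ) = 0`.
Since `n ≥ 2` the unit sphere is connected, so `θ ↦ ⟪θ, ξ⟫` takes every value in `[-‖ξ‖, ‖ξ‖]`: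
`f̂` vanishes on the cone `|τ| ≤ ‖ξ‖`. Because `f` has compact support in time, `τ ↦ f̂(τ, ξ)` is
the restriction of an entire function, which vanishes on a real interval when `ξ ≠ 0` and hence
everywhere. By continuity `f̂ = 0`, and injectivity of the Fourier transform on `L¹` gives `f = 0`.
-/

open MeasureTheory Metric Filter Set FourierTransform WithLp
open scoped Real RealInnerProductSpace Topology SchwartzMap ContDiff

theorem MeasureTheory.Integrable.fourierChar_smul {α E : Type*} [MeasurableSpace α]
    {μ : Measure α} [NormedAddCommGroup E] [NormedSpace ℂ E] {g : α → E} (hg : Integrable g μ)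
    {φ : α → ℝ} (hφ : AEStronglyMeasurable φ μ) : Integrable (fun p => 𝐞 (φ p) • g p) μ :=
  (integrable_norm_iff ((Real.continuous_fourierChar.comp_aestronglyMeasurable hφ).fun_smul
    hg.1)).1 (by simpa only [Circle.norm_smul] using hg.norm)

theorem differentiable_integral_cexp_mul {α : Type*} [MeasurableSpace α] {μ : Measure α}
    {g a : α → ℂ} (hg : Integrable g μ) (ha : AEStronglyMeasurable a μ) {R : ℝ}
    (hR : ∀ p, g p ≠ 0 → ‖a p‖ ≤ R) :
    Differentiable ℂ fun z => ∫ p, Complex.exp (a p * z) * g p ∂μ := by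
  have hbound : ∀ p z, ‖Complex.exp (a p * z) * g p‖ ≤ Real.exp (R * ‖z‖) * ‖g p‖ := by
    intro p z
    rcases eq_or_ne (g p) 0 with h0 | h0
    · simp [h0]
    rw [norm_mul]
    refine mul_le_mul_of_nonneg_right ((Complex.norm_exp_le_exp_norm _).trans ?_) (norm_nonneg _)
    rw [Real.exp_le_exp, norm_mul]
    exact mul_le_mul_of_nonneg_right (hR p h0) (norm_nonneg z)
  have hmeas : ∀ z, AEStronglyMeasurable (fun p => Complex.exp (a p * z) * g p) μ := fun z =>
    (Complex.continuous_exp.comp_aestronglyMeasurable (ha.mul_const z)).mul hg.1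
  intro z₀
  have hball : ∀ z ∈ ball z₀ 1, ‖z‖ ≤ ‖z₀‖ + 1 := fun z hz => by
    have := norm_le_norm_add_norm_sub' z z₀
    rw [mem_ball, dist_eq_norm] at hz
    linarith
  refine (hasDerivAt_integral_of_dominated_loc_of_deriv_le (ball_mem_nhds z₀ one_pos)
    (F' := fun z p => a p * (Complex.exp (a p * z) * g p))
    (bound := fun p => R * Real.exp (R * (‖z₀‖ + 1)) * ‖g p‖) (.of_forall hmeas)
    ((hg.norm.const_mul _).mono' (hmeas z₀) (ae_of_all _ fun p => hbound p z₀))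
    (ha.mul (hmeas z₀)) ?_ (hg.norm.const_mul _) ?_).2.differentiableAt
  · refine ae_of_all _ fun p z hz => ?_
    rcases eq_or_ne (g p) 0 with h0 | h0
    · simp [h0]
    have hR0 : 0 ≤ R := (norm_nonneg _).trans (hR p h0)
    rw [norm_mul, mul_assoc]
    gcongr
    · exact hR p h0
    · exact (hbound p z).trans (by gcongr; exact hball z hz)
  · refine ae_of_all _ fun p z _ => ?_
    simpa [mul_comm, mul_assoc, mul_left_comm] using
      (((hasDerivAt_id z).const_mul (a p)).cexp).mul_const (g p)

theorem Differentiable.eq_zero_of_eventually_eq_zero_ofReal {G : ℂ → ℂ}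
    (hG : Differentiable ℂ G) (h : ∀ᶠ τ : ℝ in 𝓝 0, G τ = 0) : G = 0 := by
  have hofReal : Tendsto ((↑) : ℝ → ℂ) (𝓝[≠] 0) (𝓝[≠] 0) := by
    have := Complex.continuous_ofReal.continuousWithinAt.tendsto_nhdsWithin (x := 0)
      (s := {0}ᶜ) (t := {0}ᶜ) fun x hx => by simpa using hx
    rwa [Complex.ofReal_zero] at this
  have hA : AnalyticOnNhd ℂ G univ := fun w _ => hG.analyticAt w
  funext z
  exact hA.eqOn_zero_of_preconnected_of_frequently_eq_zero isPreconnected_univ (mem_univ 0)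
    (hofReal.frequently (eventually_nhdsWithin_of_eventually_nhds h).frequently) (mem_univ z)

section InnerProductSpace

variable {V : Type*} [NormedAddCommGroup V] [InnerProductSpace ℝ V]

theorem exists_mem_sphere_inner_eq (hV : 1 < Module.rank ℝ V) {ξ : V} (hξ : ξ ≠ 0) {t : ℝ}
    (ht : |t| ≤ ‖ξ‖) : ∃ θ ∈ sphere (0 : V) 1, ⟪θ, ξ⟫ = t := by
  have hu : ‖ξ‖⁻¹ • ξ ∈ sphere (0 : V) 1 := by simp [norm_smul, hξ]
  have hneg : -(‖ξ‖⁻¹ • ξ) ∈ sphere (0 : V) 1 := by simpa using hu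
  have hIcc : t ∈ Icc ⟪-(‖ξ‖⁻¹ • ξ), ξ⟫ ⟪‖ξ‖⁻¹ • ξ, ξ⟫ := by
    simp only [inner_neg_left, real_inner_smul_left, real_inner_self_eq_norm_sq]
    rw [sq, inv_mul_cancel_left₀ (norm_ne_zero_iff.2 hξ)]
    exact abs_le.1 ht
  exact (isPreconnected_sphere hV 0 1).intermediate_value hneg hu
    (continuous_id.inner continuous_const).continuousOn hIcc

variable [MeasurableSpace V] [BorelSpace V] [FiniteDimensional ℝ V]

theorem MeasureTheory.Integrable.ae_eq_zero_of_fourier_eq_zero {f : V → ℂ} (hf : Integrable f)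
    (h : 𝓕 f = 0) : f =ᵐ[volume] 0 := by
  refine ae_eq_zero_of_integral_contDiff_smul_eq_zero hf.locallyIntegrable fun g hg hgc => ?_
  let ψ : 𝓢(V, ℂ) := (hgc.comp_left (g := Complex.ofRealCLM) rfl).toSchwartzMap (by fun_prop)
  let φ : 𝓢(V, ℂ) := 𝓕⁻ ψ
  have hφ : 𝓕 (φ : V → ℂ) = ψ := by
    rw [← SchwartzMap.fourier_coe, FourierTransform.fourier_fourierInv_eq]
  calc ∫ x, g x • f x = ∫ x, f x • 𝓕 (φ : V → ℂ) x := by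
        simp [hφ, ψ, Complex.real_smul, mul_comm]
    _ = ∫ ξ, 𝓕 f ξ • φ ξ := by
        simpa [flip_innerₗ] using! (VectorFourier.integral_fourierIntegral_smul_eq_flip
          (L := innerₗ V) (μ := volume) Real.continuous_fourierChar continuous_inner hf
          φ.integrable).symm
    _ = 0 := by simp [h]

/- `ℝ × V` carries the sup norm; its Euclidean structure lives on `WithLp 2 (ℝ × V)`, so the
space-time Fourier transform of `f` is `𝓕 (f ∘ ofLp)`. -/
theorem fourier_comp_ofLp (f : ℝ × V → ℂ) (τ : ℝ) (ξ : V) :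
    𝓕 (f ∘ @ofLp 2 (ℝ × V)) (toLp 2 (τ, ξ)) =
      ∫ p : ℝ × V, 𝐞 (-(p.1 * τ + ⟪p.2, ξ⟫)) • f p := by
  rw [Real.fourier_eq,
    ← (volume_preserving_symm_measurableEquiv_toLp_prod ℝ V).symm.integral_comp']
  simp [mul_comm]

theorem fourier_comp_ofLp_eq_zero_of_lightRay {f : ℝ × V → ℂ} (hf : Integrable f) (θ ξ : V)
    (hL : ∀ᵐ y : V, ∫ s : ℝ, f (s, y + s • θ) = 0) :
    𝓕 (f ∘ @ofLp 2 (ℝ × V)) (toLp 2 (-⟪θ, ξ⟫, ξ)) = 0 := by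
  let T : ℝ × V → ℝ × V := fun q => (q.1, q.2 + q.1 • θ)
  have hT : MeasurePreserving T := by
    rw [Measure.volume_eq_prod]
    exact (MeasurePreserving.id volume).skew_product (g := fun s y => y + s • θ) (by fun_prop)
      (ae_of_all _ fun s => map_add_right_eq_self volume _)
  let H : ℝ × V → ℂ := fun p => 𝐞 (-(p.1 * -⟪θ, ξ⟫ + ⟪p.2, ξ⟫)) • f p
  have hH : Integrable H := hf.fourierChar_smul (by fun_prop)
  have hshear : ∫ p, H p = ∫ q : ℝ × V, 𝐞 (-⟪q.2, ξ⟫) • f (q.1, q.2 + q.1 • θ) := by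
    conv_lhs => rw [← hT.map_eq]
    rw [integral_map hT.measurable.aemeasurable (hT.map_eq.symm ▸ hH.1)]
    congr 1 with q
    simp only [H, T, inner_add_left, real_inner_smul_left]
    ring_nf
  have hsheared : Integrable (fun q : ℝ × V => 𝐞 (-⟪q.2, ξ⟫) • f (q.1, q.2 + q.1 • θ))
      (volume.prod volume) := by
    rw [← Measure.volume_eq_prod]
    exact (hT.integrable_comp_of_integrable hf).fourierChar_smul (by fun_prop)
  rw [fourier_comp_ofLp, hshear, Measure.volume_eq_prod, integral_prod_symm _ hsheared]
  refine integral_eq_zero_of_ae ?_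
  filter_upwards [hL] with y hy
  simp only [Pi.zero_apply, Circle.smul_def]
  rw [integral_smul, hy, smul_zero]

theorem HasCompactSupport.exists_differentiable_fourier_comp_ofLp {f : ℝ × V → ℂ}
    (hf : Integrable f) (hsupp : HasCompactSupport f) (ξ : V) :
    ∃ G : ℂ → ℂ, Differentiable ℂ G ∧
      ∀ τ : ℝ, G τ = 𝓕 (f ∘ @ofLp 2 (ℝ × V)) (toLp 2 (τ, ξ)) := by
  obtain ⟨R, hR⟩ := hsupp.isCompact.exists_bound_of_continuousOn
    (f := fun p : ℝ × V => -(2 * π * Complex.I) * p.1) (by fun_prop)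
  refine ⟨_, differentiable_integral_cexp_mul (hf.fourierChar_smul (φ := fun p => -⟪p.2, ξ⟫)
    (by fun_prop)) (by fun_prop) fun p hp => hR p (subset_tsupport _ fun h => hp (by simp [h])),
    fun τ => ?_⟩
  rw [fourier_comp_ofLp]
  congr 1 with p
  simp only [Circle.smul_def, smul_eq_mul, Real.fourierChar_apply, ← mul_assoc, ← Complex.exp_add]
  congr 2
  push_cast
  ring

end InnerProductSpace

/-- Injectivity of the light ray transform on compactly supported integrable functions:
if for every direction `θ` on the unit sphere the integrals of `f` along the light rays
`s ↦ (s, y + sθ)` vanish for almost every `y`, then `f = 0` almost everywhere. -/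
theorem lightRay_injective {n : ℕ} (hn : 2 ≤ n)
    (f : ℝ × EuclideanSpace ℝ (Fin n) → ℂ)
    (hf : Integrable f) (hsupp : HasCompactSupport f)
    (hL : ∀ θ : sphere (0 : EuclideanSpace ℝ (Fin n)) 1,
      ∀ᵐ y : EuclideanSpace ℝ (Fin n),
        (∫ s : ℝ, f (s, y + s • (θ : EuclideanSpace ℝ (Fin n)))) = 0) :
    f =ᵐ[volume] 0 := by
  let F := f ∘ @ofLp 2 (ℝ × EuclideanSpace ℝ (Fin n))
  have hF : Integrable F := (volume_preserving_ofLp ℝ _).integrable_comp_of_integrable hf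
  have hrank : 1 < Module.rank ℝ (EuclideanSpace ℝ (Fin n)) := by
    rw [← Module.finrank_eq_rank, finrank_euclideanSpace_fin]
    exact_mod_cast hn
  have : Nontrivial (EuclideanSpace ℝ (Fin n)) :=
    Module.nontrivial_of_finrank_pos (R := ℝ) (by rw [finrank_euclideanSpace_fin]; omega)
  have hcone : ∀ ξ ≠ 0, ∀ τ : ℝ, |τ| ≤ ‖ξ‖ → 𝓕 F (toLp 2 (τ, ξ)) = 0 := by
    intro ξ hξ τ hτ
    obtain ⟨θ, hθ, hθξ⟩ := exists_mem_sphere_inner_eq hrank hξ (t := -τ) (by rwa [abs_neg])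
    simpa [hθξ] using fourier_comp_ofLp_eq_zero_of_lightRay hf θ ξ (hL ⟨θ, hθ⟩)
  have hoff : ∀ ξ ≠ 0, ∀ τ : ℝ, 𝓕 F (toLp 2 (τ, ξ)) = 0 := by
    intro ξ hξ τ
    obtain ⟨G, hG, hGF⟩ := hsupp.exists_differentiable_fourier_comp_ofLp hf ξ
    have hG0 : G = 0 := hG.eq_zero_of_eventually_eq_zero_ofReal <| by
      filter_upwards [closedBall_mem_nhds 0 (norm_pos_iff.2 hξ)] with τ hτ
      rw [hGF]
      exact hcone ξ hξ τ (by simpa using hτ)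
    rw [← hGF, hG0, Pi.zero_apply]
  have hcont : Continuous (𝓕 F) :=
    VectorFourier.fourierIntegral_continuous Real.continuous_fourierChar continuous_inner hF
  have hzero : 𝓕 F = 0 := by
    ext ⟨τ, ξ⟩
    have := (hcont.comp (by fun_prop : Continuous fun ξ => toLp 2 (τ, ξ))).ext_on
      (dense_compl_singleton 0) continuous_const fun ξ hξ => hoff ξ hξ τ
    exact congrFun this ξ
  exact (volume_preserving_toLp ℝ _).quasiMeasurePreserving.ae_eq_comp
    (hF.ae_eq_zero_of_fourier_eq_zero hzero)
end

section
/- For every natural number m there exist complex numbers c_0, …, c_m and d_0, …, d_m, with c_0 = m! and d_0 = (−1)^{m+1} m!, such that for every real λ ≠ 0: ∫_{−1}^0 e^{iλs} (−s)^m (1+s)^m ds = Σ_{k=0}^m c_k (iλ)^{−(m+1+k)} + e^{−iλ} · Σ_{k=0}^m d_k (iλ)^{−(m+1+k)}. -/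
/-! Integrating `e^{μs} P(s)` by parts until the polynomial `P` is exhausted gives the exact
primitive `e^{μs} ∑ⱼ (-1)^j μ^{-(j+1)} P⁽ʲ⁾(s)`. For `P(s) = (-s)^m (1+s)^m`, which vanishes to
order `m` at both endpoints, only the derivatives of order `m, …, 2m` leave boundary terms, and
the leading ones are read off from `P = X^m ((-1)^m (1+X)^m)` at `0` and
`P(X - 1) = X^m (1-X)^m` at `-1`. -/

open Polynomial Finset
open scoped Nat

lemma Polynomial.eval_iterate_derivative_eq_factorial_mul_coeff_taylor {R : Type*}
    [CommSemiring R] (P : R[X]) (j : ℕ) (r : R) :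
    (derivative^[j] P).eval r = j ! * (taylor r P).coeff j := by
  rw [← factorial_smul_hasseDeriv, taylor_coeff]
  simp [nsmul_eq_mul]

/-- The boundary terms of `N + 1` integrations by parts of `∫ exp (μ s) P(s) ds`, without the
common factor `exp (μ s)`. -/
noncomputable def expPolyPrimitive (μ : ℂ) (P : ℂ[X]) (N : ℕ) (z : ℂ) : ℂ :=
  ∑ j ∈ range (N + 1), (-1) ^ j * μ⁻¹ ^ (j + 1) * (derivative^[j] P).eval z

lemma hasDerivAt_expPolyPrimitive (μ : ℂ) (P : ℂ[X]) (N : ℕ) (z : ℂ) :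
    HasDerivAt (expPolyPrimitive μ P N) (expPolyPrimitive μ (derivative P) N z) z := by
  unfold expPolyPrimitive
  refine HasDerivAt.fun_sum fun j _ => ?_
  rw [← Function.iterate_succ_apply, Function.iterate_succ_apply']
  exact ((derivative^[j] P).hasDerivAt z).const_mul _

lemma mul_expPolyPrimitive_add_expPolyPrimitive_derivative {μ : ℂ} (hμ : μ ≠ 0) {P : ℂ[X]}
    {N : ℕ} (hN : P.natDegree ≤ N) (z : ℂ) :
    μ * expPolyPrimitive μ P N z + expPolyPrimitive μ (derivative P) N z = P.eval z := by
  set g : ℕ → ℂ := fun j => (-1) ^ j * μ⁻¹ ^ j * (derivative^[j] P).eval z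
  have hstep : ∀ j, μ * ((-1) ^ j * μ⁻¹ ^ (j + 1) * (derivative^[j] P).eval z)
      + (-1) ^ j * μ⁻¹ ^ (j + 1) * (derivative^[j] (derivative P)).eval z
      = g j - g (j + 1) := by
    intro j
    simp only [g, ← Function.iterate_succ_apply, pow_succ]
    linear_combination ((-1) ^ j * μ⁻¹ ^ j * (derivative^[j] P).eval z) * mul_inv_cancel₀ hμ
  have hvanish : derivative^[N + 1] P = 0 := iterate_derivative_eq_zero (by omega)
  simp only [expPolyPrimitive, mul_sum, ← sum_add_distrib, hstep, sum_range_sub' g]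
  simp [g, hvanish]

lemma hasDerivAt_exp_mul_expPolyPrimitive {μ : ℂ} (hμ : μ ≠ 0) {P : ℂ[X]} {N : ℕ}
    (hN : P.natDegree ≤ N) (z : ℂ) :
    HasDerivAt (fun z => Complex.exp (μ * z) * expPolyPrimitive μ P N z)
      (Complex.exp (μ * z) * P.eval z) z := by
  have hexp : HasDerivAt (fun z => Complex.exp (μ * z)) (Complex.exp (μ * z) * μ) z :=
    ((hasDerivAt_id z).const_mul μ).cexp.congr_deriv (by simp [mul_comm])
  refine (hexp.mul (hasDerivAt_expPolyPrimitive μ P N z)).congr_deriv ?_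
  rw [← mul_expPolyPrimitive_add_expPolyPrimitive_derivative hμ hN z]
  ring

theorem integral_exp_mul_eval_eq {μ : ℂ} (hμ : μ ≠ 0) {P : ℂ[X]} {N : ℕ}
    (hN : P.natDegree ≤ N) (a b : ℝ) :
    ∫ s in a..b, Complex.exp (μ * s) * P.eval (s : ℂ)
      = Complex.exp (μ * b) * expPolyPrimitive μ P N b
        - Complex.exp (μ * a) * expPolyPrimitive μ P N a := by
  refine intervalIntegral.integral_eq_sub_of_hasDerivAt
    (fun t _ => (hasDerivAt_exp_mul_expPolyPrimitive hμ hN t).comp_ofReal) ?_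
  exact ((Complex.continuous_exp.comp (continuous_const.mul Complex.continuous_ofReal)).mul
    (P.continuous.comp Complex.continuous_ofReal)).intervalIntegrable _ _

/-- `(-1) ^ (m + k) P⁽ᵐ⁺ᵏ⁾(r)`, written through the Taylor coefficient of `P` at `r`. -/
noncomputable def boundaryCoeff (P : ℂ[X]) (m : ℕ) (r : ℂ) (k : ℕ) : ℂ :=
  (-1) ^ (m + k) * (m + k)! * (taylor r P).coeff (m + k)

lemma boundaryCoeff_zero_of_taylor_eq {P Q : ℂ[X]} {m : ℕ} {r : ℂ}
    (hP : taylor r P = X ^ m * Q) :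
    boundaryCoeff P m r 0 = (-1) ^ m * m ! * Q.eval 0 := by
  simp [boundaryCoeff, hP, coeff_X_pow_mul', coeff_zero_eq_eval_zero]

lemma expPolyPrimitive_add_eq_sum_boundaryCoeff (μ : ℂ) {P : ℂ[X]} {m : ℕ} (n : ℕ) {r : ℂ}
    (hdvd : X ^ m ∣ taylor r P) :
    expPolyPrimitive μ P (m + n) r
      = ∑ k ∈ range (n + 1), boundaryCoeff P m r k * μ⁻¹ ^ (m + 1 + k) := by
  have hlow : ∑ j ∈ range m, (-1) ^ j * μ⁻¹ ^ (j + 1) * (derivative^[j] P).eval r = 0 :=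
    sum_eq_zero fun j hj => by
      rw [eval_iterate_derivative_eq_factorial_mul_coeff_taylor,
        X_pow_dvd_iff.mp hdvd j (mem_range.mp hj), mul_zero, mul_zero]
  rw [expPolyPrimitive, add_assoc, sum_range_add, hlow, zero_add]
  refine sum_congr rfl fun k _ => ?_
  rw [eval_iterate_derivative_eq_factorial_mul_coeff_taylor, boundaryCoeff]
  ring

theorem integral_neg_one_zero_exp_mul_eval_eq {μ : ℂ} (hμ : μ ≠ 0) {P : ℂ[X]} {m n : ℕ}
    (hdeg : P.natDegree ≤ m + n) (h₀ : X ^ m ∣ taylor 0 P) (h₁ : X ^ m ∣ taylor (-1) P) :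
    ∫ s in (-1 : ℝ)..0, Complex.exp (μ * s) * P.eval (s : ℂ)
      = ∑ k ∈ range (n + 1), boundaryCoeff P m 0 k * μ⁻¹ ^ (m + 1 + k)
        - Complex.exp (-μ) *
          ∑ k ∈ range (n + 1), boundaryCoeff P m (-1) k * μ⁻¹ ^ (m + 1 + k) := by
  rw [integral_exp_mul_eval_eq hμ hdeg]
  push_cast
  rw [expPolyPrimitive_add_eq_sum_boundaryCoeff μ n h₀,
    expPolyPrimitive_add_eq_sum_boundaryCoeff μ n h₁]
  simp

/-- Exact finite expansion, by repeated integration by parts, of the oscillatory integral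
`∫_{−1}^0 e^{iλs} (−s)^m (1+s)^m ds` in inverse powers of `iλ`, with explicit leading
coefficients `c₀ = m!` and `d₀ = (−1)^{m+1} m!`. -/
theorem oscillatory_ibp_expansion (m : ℕ) :
    ∃ c d : Fin (m + 1) → ℂ,
      c 0 = (Nat.factorial m : ℂ) ∧
      d 0 = (-1 : ℂ) ^ (m + 1) * (Nat.factorial m : ℂ) ∧
      ∀ lam : ℝ, lam ≠ 0 →
        (∫ s in (-1 : ℝ)..0,
            Complex.exp (Complex.I * lam * s) * (-s : ℂ) ^ m * (1 + (s : ℂ)) ^ m)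
          = (∑ k : Fin (m + 1), c k * (Complex.I * lam) ^ (-(m + 1 + (k : ℕ) : ℤ)))
            + Complex.exp (-(Complex.I * lam)) *
              ∑ k : Fin (m + 1), d k * (Complex.I * lam) ^ (-(m + 1 + (k : ℕ) : ℤ)) := by
  obtain ⟨P, hP⟩ : ∃ P : ℂ[X], P = (-X) ^ m * (1 + X) ^ m := ⟨_, rfl⟩
  have hP₀ : taylor 0 P = X ^ m * ((-1) ^ m * (1 + X) ^ m) := by
    rw [taylor_zero, hP, neg_pow]; ring
  have hP₁ : taylor (-1) P = X ^ m * (1 - X) ^ m := by simp [hP, taylor_apply]; ring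
  have hdeg : P.natDegree ≤ m + m := by
    rw [hP]
    compute_degree!
  refine ⟨fun k => boundaryCoeff P m 0 k, fun k => -boundaryCoeff P m (-1) k, ?_, ?_,
    fun lam hlam => ?_⟩
  · simp [boundaryCoeff_zero_of_taylor_eq hP₀, mul_right_comm _ (m ! : ℂ), ← mul_pow]
  · simp [boundaryCoeff_zero_of_taylor_eq hP₁, pow_succ]
  · have hμ : Complex.I * lam ≠ 0 := by simpa using hlam
    have hintegrand : ∀ s : ℝ,
        Complex.exp (Complex.I * lam * s) * (-s : ℂ) ^ m * (1 + (s : ℂ)) ^ m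
          = Complex.exp (Complex.I * lam * s) * P.eval (s : ℂ) := fun s => by simp [hP]; ring
    simp only [hintegrand, integral_neg_one_zero_exp_mul_eval_eq hμ hdeg
      (hP₀ ▸ dvd_mul_right _ _) (hP₁ ▸ dvd_mul_right _ _)]
    have hzpow : ∀ k : ℕ,
        (Complex.I * lam) ^ (-(m + 1 + k : ℤ)) = (Complex.I * lam)⁻¹ ^ (m + 1 + k) := fun k => by
      rw [← inv_zpow']; norm_cast
    simp only [neg_mul, sum_neg_distrib, mul_neg, hzpow,
      Fin.sum_univ_eq_sum_range (fun k => _ * (Complex.I * lam)⁻¹ ^ (m + 1 + k)), sub_eq_add_neg]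
end

section
/- Let n ≥ 2. Define Λ₁ = {(t,x,τ,ξ,t',x',τ',ξ') ∈ (ℝ×ℝ^n×ℝ×ℝ^n)² : ξ ≠ 0, x = x' + (t−t')ξ/‖ξ‖, (τ = ‖ξ‖ or τ = −‖ξ‖), τ' = −τ, ξ' = −ξ} and Λ⁺ = {(t,x,τ,ξ,z,η) ∈ (ℝ×ℝ^n×ℝ×ℝ^n)×(ℝ^n×ℝ^n) : η ≠ 0, x = z + tη/‖η‖, ξ = −η, τ = ‖η‖}. Then the fiber-product set {(p,q) ∈ Λ₁ × Λ⁺ : the last four components (t',x',τ',ξ') of p coincide with the first four components (t,x,τ,ξ) of q} is exactly the image of the map Φ(t, t̃, z, η) = ( (t, z + tη/‖η‖, −‖η‖, η, t̃, z + t̃η/‖η‖, ‖η‖, −η), (t̃, z + t̃η/‖η‖, ‖η‖, −η, z, η) ) defined for (t, t̃, z, η) ∈ ℝ × ℝ × ℝ^n × (ℝ^n∖{0}), and Φ is injective. -/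
open scoped Real

/-- Phase space point `(t, x, τ, ξ)` of `T^*ℝ^{1+n}`. -/
abbrev Phase (n : ℕ) :=
  ℝ × EuclideanSpace ℝ (Fin n) × ℝ × EuclideanSpace ℝ (Fin n)

/-- Point `(z, η)` of `T^*ℝ^n`. -/
abbrev Base (n : ℕ) :=
  EuclideanSpace ℝ (Fin n) × EuclideanSpace ℝ (Fin n)

/-- The flow-out Lagrangian `Λ₁` of the normal operator of the Minkowski light ray
transform. -/
def Lambda1 (n : ℕ) : Set (Phase n × Phase n) := fun p =>
  p.1.2.2.2 ≠ 0 ∧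
  p.1.2.1 = p.2.2.1 + (p.1.1 - p.2.1) • (‖p.1.2.2.2‖⁻¹ • p.1.2.2.2) ∧
  (p.1.2.2.1 = ‖p.1.2.2.2‖ ∨ p.1.2.2.1 = -‖p.1.2.2.2‖) ∧
  p.2.2.2.1 = -p.1.2.2.1 ∧
  p.2.2.2.2 = -p.1.2.2.2

/-- The twisted canonical relation `Λ⁺` of the forward half-wave parametrix. -/
def LambdaPlus (n : ℕ) : Set (Phase n × Base n) := fun p =>
  p.2.2 ≠ 0 ∧
  p.1.2.1 = p.2.1 + p.1.1 • (‖p.2.2‖⁻¹ • p.2.2) ∧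
  p.1.2.2.2 = -p.2.2 ∧
  p.1.2.2.1 = ‖p.2.2‖

/-- The parametrization `Φ(t, t̃, z, η)` of the composition fiber of `Λ₁` and `Λ⁺`. -/
noncomputable def Phi (n : ℕ)
    (v : ℝ × ℝ × EuclideanSpace ℝ (Fin n) × EuclideanSpace ℝ (Fin n)) :
    (Phase n × Phase n) × (Phase n × Base n) :=
  (((v.1, v.2.2.1 + v.1 • (‖v.2.2.2‖⁻¹ • v.2.2.2), -‖v.2.2.2‖, v.2.2.2),
    (v.2.1, v.2.2.1 + v.2.1 • (‖v.2.2.2‖⁻¹ • v.2.2.2), ‖v.2.2.2‖, -v.2.2.2)),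
   ((v.2.1, v.2.2.1 + v.2.1 • (‖v.2.2.2‖⁻¹ • v.2.2.2), ‖v.2.2.2‖, -v.2.2.2),
    (v.2.2.1, v.2.2.2)))

/-- The composition fiber of `Λ₁` and `Λ⁺` is exactly the image of the injective map `Φ`
defined on `{(t, t̃, z, η) : η ≠ 0}`. -/
theorem fiber_parametrization (n : ℕ) (hn : 2 ≤ n) :
    Set.InjOn (Phi n)
        {v : ℝ × ℝ × EuclideanSpace ℝ (Fin n) × EuclideanSpace ℝ (Fin n) | v.2.2.2 ≠ 0} ∧
    {q : (Phase n × Phase n) × (Phase n × Base n) |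
        q.1 ∈ Lambda1 n ∧ q.2 ∈ LambdaPlus n ∧ q.1.2 = q.2.1}
      = Phi n ''
        {v : ℝ × ℝ × EuclideanSpace ℝ (Fin n) × EuclideanSpace ℝ (Fin n) | v.2.2.2 ≠ 0} := by
  constructor
  · intro v _ v' _ h
    have := congrArg (fun q : (Phase n × Phase n) × (Phase n × Base n) =>
      (q.1.1.1, q.1.2.1, q.2.2)) h
    simpa [Phi, Prod.ext_iff] using this
  · apply Set.Subset.antisymm
    · rintro ⟨⟨⟨t, x, τ, ξ⟩, ⟨t', x', τ', ξ'⟩⟩, ⟨⟨s, y, σ, ζ⟩, z, η⟩⟩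
        ⟨⟨hξ, hx, hτ, hτ', hξ'⟩, ⟨hη, hy, hζ, hσ⟩, heq⟩
      dsimp only at hξ hx hτ hτ' hξ' hη hy hζ hσ heq
      simp only [Prod.mk.injEq] at heq
      obtain ⟨ht, hxy, hτσ, hξζ⟩ := heq
      subst ht hxy hτσ hξζ
      have hξη : ξ = η := neg_injective (hξ'.symm.trans hζ)
      subst hξη
      have hτval : τ = -‖ξ‖ := by
        have := hτ'.symm.trans hσ; linarith
      subst hτval
      have hxval : x = z + t • (‖ξ‖⁻¹ • ξ) := by
        have hst : t' + (t - t') = t := by ring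
        rw [hx, hy, add_assoc, ← add_smul, hst]
      subst hxval hy hσ hζ
      exact ⟨(t, t', z, ξ), hξ, rfl⟩
    · rintro _ ⟨⟨a, b, w, u⟩, hu, rfl⟩
      have hu' : u ≠ 0 := hu
      refine ⟨⟨hu', ?_, Or.inr rfl, by simp only [Phi]; ring, rfl⟩, ⟨hu', rfl, rfl, rfl⟩, rfl⟩
      simp only [Phi]
      have hba : b + (a - b) = a := by ring
      rw [add_assoc, ← add_smul, hba]
end

section
/- Let n ≥ 2. Define Λ⁺ = {(t,x,τ,ξ,z,η) ∈ (ℝ×ℝ^n×ℝ×ℝ^n)×(ℝ^n×ℝ^n) : η ≠ 0, x = z + tη/‖η‖, ξ = −η, τ = ‖η‖} and its inverse relation Λ^{+,inv} = {(z,η,t,x,τ,ξ) ∈ (ℝ^n×ℝ^n)×(ℝ×ℝ^n×ℝ×ℝ^n) : η ≠ 0, x = z + tη/‖η‖, ξ = −η, τ = ‖η‖}. In the ambient space W = (ℝ^n×ℝ^n)×(ℝ×ℝ^n×ℝ×ℝ^n)×(ℝ×ℝ^n×ℝ×ℝ^n)×(ℝ^n×ℝ^n), set 𝒳 = Λ^{+,inv}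 × Λ⁺ and 𝒴 = {(a,p,q,b) ∈ W : p = q}. Then: (i) 𝒳 ∩ 𝒴 equals the image of the injective map Ψ(t,z,η) = ( (z, η, t, z + tη/‖η‖, ‖η‖, −η), (t, z + tη/‖η‖, ‖η‖, −η, z, η) ), (t,z,η) ∈ ℝ × ℝ^n × (ℝ^n∖{0}); and (ii) for every w ∈ 𝒳 ∩ 𝒴, tangentConeAt ℝ (𝒳∩𝒴) w = (tangentConeAt ℝ 𝒳 w) ∩ (tangentConeAt ℝ 𝒴 w). -/
open scoped Real

/-- The inverse relation `Λ^{+,inv}` of `Λ⁺`. -/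
def LambdaPlusInv (n : ℕ) : Set (Base n × Phase n) := fun p =>
  p.1.2 ≠ 0 ∧
  p.2.2.1 = p.1.1 + p.2.1 • (‖p.1.2‖⁻¹ • p.1.2) ∧
  p.2.2.2.2 = -p.1.2 ∧
  p.2.2.2.1 = ‖p.1.2‖

/-- The parametrization `Ψ(t, z, η)` of the composition fiber of `Λ^{+,inv}` and `Λ⁺`. -/
noncomputable def Psi (n : ℕ)
    (v : ℝ × EuclideanSpace ℝ (Fin n) × EuclideanSpace ℝ (Fin n)) :
    (Base n × Phase n) × (Phase n × Base n) :=
  (((v.2.1, v.2.2), (v.1, v.2.1 + v.1 • (‖v.2.2‖⁻¹ • v.2.2), ‖v.2.2‖, -v.2.2)),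
   ((v.1, v.2.1 + v.1 • (‖v.2.2‖⁻¹ • v.2.2), ‖v.2.2‖, -v.2.2), (v.2.1, v.2.2)))

/-!
Both `Λ⁺` and `Λ^{+,inv}` are graphs over the parameters `(t, z, η)` of
`phasePoint (t, z, η) = (t, z + t η/‖η‖, ‖η‖, -η)`, which has the smooth left inverse
`(t, x, τ, ξ) ↦ (t, x + t ξ/‖ξ‖, -ξ)`; hence `phasePoint` and its differential are injective.
Injectivity of `phasePoint` turns the matching condition `p = q` of `𝒴` into equality of the two
base points, which gives (i). Injectivity of the differential does the same for the linearised
equations cutting out `T𝒳 ∩ T𝒴`, so every vector there lies in the range of `dΨ`, and the range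
of `dΨ` is tangent to `Ψ(U) = 𝒳 ∩ 𝒴` because `U = {η ≠ 0}` is open.
-/

open Set Function Filter Topology

section TangentCone

variable {𝕜 E F : Type*} [NontriviallyNormedField 𝕜] [NormedAddCommGroup E] [NormedSpace 𝕜 E]
  [NormedAddCommGroup F] [NormedSpace 𝕜 F] {f : E → F} {f' : E →L[𝕜] F} {s : Set E} {a : E}

theorem HasFDerivWithinAt.tangentConeAt_subset_ker (hf : HasFDerivWithinAt f f' s a)
    (hs : ∀ x ∈ s, f x = f a) : tangentConeAt 𝕜 s a ⊆ f' ⁻¹' {0} := fun v hv ↦ by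
  have hnot : ¬AccPt (f a) (𝓟 {f a}) := fun h ↦ Set.Infinite.of_accPt h (finite_singleton (f a))
  have himage : f '' s ⊆ {f a} := image_subset_iff.2 fun x hx ↦ hs x hx
  exact tangentConeAt_subset_zero hnot (tangentConeAt_mono himage (hf.mapsTo_tangent_cone hv))

theorem HasFDerivWithinAt.range_subset_tangentConeAt_image (hf : HasFDerivWithinAt f f' s a)
    (hs : s ∈ 𝓝 a) : range f' ⊆ tangentConeAt 𝕜 (f '' s) (f a) := by
  rintro _ ⟨v, rfl⟩
  exact hf.mapsTo_tangent_cone (by rw [tangentConeAt_of_mem_nhds hs]; trivial)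

theorem HasFDerivAt.injective_of_leftInverse {g : F → E} {g' : F →L[𝕜] E}
    (hf : HasFDerivAt f f' a) (hg : HasFDerivAt g g' (f a)) (hgf : LeftInverse g f) :
    Injective f' := by
  have h : g'.comp f' = ContinuousLinearMap.id 𝕜 E :=
    (hg.comp a hf).unique (by rw [hgf.comp_eq_id]; exact hasFDerivAt_id a)
  exact LeftInverse.injective (g := g') fun v ↦ by simpa using congr($h v)

end TangentCone

section PhasePoint

variable {E : Type*} [NormedAddCommGroup E] [InnerProductSpace ℝ E]

noncomputable def phasePoint (v : ℝ × E × E) : ℝ × E × ℝ × E :=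
  (v.1, v.2.1 + v.1 • (‖v.2.2‖⁻¹ • v.2.2), ‖v.2.2‖, -v.2.2)

noncomputable def paramOfPhasePoint (p : ℝ × E × ℝ × E) : ℝ × E × E :=
  (p.1, p.2.1 + p.1 • (‖p.2.2.2‖⁻¹ • p.2.2.2), -p.2.2.2)

theorem leftInverse_paramOfPhasePoint : LeftInverse (paramOfPhasePoint (E := E)) phasePoint := by
  rintro ⟨t, z, η⟩
  simp [phasePoint, paramOfPhasePoint]

theorem phasePoint_injective : Injective (phasePoint (E := E)) :=
  leftInverse_paramOfPhasePoint.injective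

theorem differentiableAt_phasePoint {v : ℝ × E × E} (hv : v.2.2 ≠ 0) :
    DifferentiableAt ℝ phasePoint v := by
  have hη : DifferentiableAt ℝ (fun v : ℝ × E × E ↦ v.2.2) v := by fun_prop
  have hnorm := hη.norm ℝ hv
  unfold phasePoint
  fun_prop (disch := simpa)

theorem differentiableAt_paramOfPhasePoint {p : ℝ × E × ℝ × E} (hp : p.2.2.2 ≠ 0) :
    DifferentiableAt ℝ paramOfPhasePoint p := by
  have hξ : DifferentiableAt ℝ (fun p : ℝ × E × ℝ × E ↦ p.2.2.2) p := by fun_prop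
  have hnorm := hξ.norm ℝ hp
  unfold paramOfPhasePoint
  fun_prop (disch := simpa)

theorem injective_fderiv_phasePoint {v : ℝ × E × E} (hv : v.2.2 ≠ 0) :
    Injective (fderiv ℝ phasePoint v) :=
  (differentiableAt_phasePoint hv).hasFDerivAt.injective_of_leftInverse
    (differentiableAt_paramOfPhasePoint (by simpa [phasePoint] using hv)).hasFDerivAt
    leftInverse_paramOfPhasePoint

end PhasePoint

section Composition

variable {n : ℕ}

abbrev PairSpace (n : ℕ) := (Base n × Phase n) × (Phase n × Base n)

def lambdaPair (n : ℕ) : Set (PairSpace n) :=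
  {w | w.1 ∈ LambdaPlusInv n ∧ w.2 ∈ LambdaPlus n}

def phaseDiagonal (n : ℕ) : Set (PairSpace n) :=
  {w | w.1.2 = w.2.1}

theorem mem_lambdaPlus_iff {q : Phase n × Base n} :
    q ∈ LambdaPlus n ↔ q.2.2 ≠ 0 ∧ q.1 = phasePoint (q.1.1, q.2) := by
  simp only [phasePoint, Prod.ext_iff, true_and]
  exact and_congr_right fun _ ↦ and_congr_right fun _ ↦ and_comm

theorem mem_lambdaPlusInv_iff {q : Base n × Phase n} :
    q ∈ LambdaPlusInv n ↔ q.1.2 ≠ 0 ∧ q.2 = phasePoint (q.2.1, q.1) := by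
  simp only [phasePoint, Prod.ext_iff, true_and]
  exact and_congr_right fun _ ↦ and_congr_right fun _ ↦ and_comm

theorem psi_eq (v : ℝ × Base n) : Psi n v = ((v.2, phasePoint v), (phasePoint v, v.2)) := rfl

theorem psi_injective : Injective (Psi n) := fun _ _ h ↦
  Prod.ext congr($h.1.2.1) congr($h.1.1)

theorem lambdaPair_inter_phaseDiagonal :
    lambdaPair n ∩ phaseDiagonal n = Psi n '' {v | v.2.2 ≠ 0} := by
  ext ⟨⟨b, p⟩, p', b'⟩
  simp only [lambdaPair, phaseDiagonal, mem_inter_iff, mem_ofPred_eq, mem_lambdaPlus_iff,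
    mem_lambdaPlusInv_iff, mem_image, psi_eq]
  constructor
  · rintro ⟨⟨⟨hb, hp⟩, -, hp'⟩, rfl⟩
    obtain rfl : b = b' := congr($(phasePoint_injective (hp.symm.trans hp')).2)
    exact ⟨(p.1, b), hb, by rw [← hp]⟩
  · rintro ⟨v, hv, h⟩
    simp only [Prod.mk.injEq] at h
    obtain ⟨⟨rfl, rfl⟩, rfl, rfl⟩ := h
    exact ⟨⟨⟨hv, rfl⟩, hv, rfl⟩, rfl⟩

theorem hasFDerivAt_psi {a : ℝ × Base n} (ha : a.2.2 ≠ 0) :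
    HasFDerivAt (Psi n)
      (((ContinuousLinearMap.snd ℝ ℝ (Base n)).prod (fderiv ℝ phasePoint a)).prod
        ((fderiv ℝ phasePoint a).prod (ContinuousLinearMap.snd ℝ ℝ (Base n)))) a := by
  have hφ := (differentiableAt_phasePoint ha).hasFDerivAt
  exact (hasFDerivAt_snd.prodMk hφ).prodMk (hφ.prodMk hasFDerivAt_snd)

theorem psi_mem_lambdaPair {a : ℝ × Base n} (ha : a.2.2 ≠ 0) : Psi n a ∈ lambdaPair n :=
  (lambdaPair_inter_phaseDiagonal.ge (mem_image_of_mem _ ha)).1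

theorem tangentConeAt_lambdaPair_subset {a : ℝ × Base n} (ha : a.2.2 ≠ 0) :
    tangentConeAt ℝ (lambdaPair n) (Psi n a) ⊆
      {v | v.1.2 = fderiv ℝ phasePoint a (v.1.2.1, v.1.1) ∧
        v.2.1 = fderiv ℝ phasePoint a (v.2.1.1, v.2.2)} := by
  set defect : PairSpace n → Phase n × Phase n :=
    fun w ↦ (w.1.2 - phasePoint (w.1.2.1, w.1.1), w.2.1 - phasePoint (w.2.1.1, w.2.2))
  have hφ := (differentiableAt_phasePoint ha).hasFDerivAt
  have hπ₁ : HasFDerivAt (fun w : PairSpace n ↦ (w.1.2.1, w.1.1)) _ (Psi n a) :=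
    (hasFDerivAt_fst (𝕜 := ℝ)).snd.fst.prodMk (hasFDerivAt_fst (𝕜 := ℝ)).fst
  have hπ₂ : HasFDerivAt (fun w : PairSpace n ↦ (w.2.1.1, w.2.2)) _ (Psi n a) :=
    (hasFDerivAt_snd (𝕜 := ℝ)).fst.fst.prodMk (hasFDerivAt_snd (𝕜 := ℝ)).snd
  have hdefect : HasFDerivAt defect _ (Psi n a) :=
    (hasFDerivAt_fst.snd.sub (hφ.comp _ hπ₁)).prodMk (hasFDerivAt_snd.fst.sub (hφ.comp _ hπ₂))
  have hzero : ∀ w ∈ lambdaPair n, defect w = 0 := fun w ⟨h₁, h₂⟩ ↦ by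
    simp only [defect, ← (mem_lambdaPlusInv_iff.1 h₁).2, ← (mem_lambdaPlus_iff.1 h₂).2,
      sub_self, Prod.mk_zero_zero]
  intro v hv
  have := hdefect.hasFDerivWithinAt.tangentConeAt_subset_ker
    (fun w hw ↦ by rw [hzero w hw, hzero _ (psi_mem_lambdaPair ha)]) hv
  simpa [sub_eq_zero] using this

theorem tangentConeAt_phaseDiagonal_subset {w : PairSpace n} (hw : w ∈ phaseDiagonal n) :
    tangentConeAt ℝ (phaseDiagonal n) w ⊆ phaseDiagonal n := by
  have hgap : HasFDerivAt (fun w : PairSpace n ↦ w.1.2 - w.2.1) _ w :=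
    (hasFDerivAt_fst (𝕜 := ℝ)).snd.sub (hasFDerivAt_snd (𝕜 := ℝ)).fst
  intro v hv
  have := hgap.hasFDerivWithinAt.tangentConeAt_subset_ker
    (fun x hx ↦ by rw [sub_eq_zero.2 hx, sub_eq_zero.2 hw]) hv
  simpa [sub_eq_zero, phaseDiagonal] using this

theorem tangentConeAt_lambdaPair_inter_phaseDiagonal {w : PairSpace n}
    (hw : w ∈ lambdaPair n ∩ phaseDiagonal n) :
    tangentConeAt ℝ (lambdaPair n ∩ phaseDiagonal n) w =
      tangentConeAt ℝ (lambdaPair n) w ∩ tangentConeAt ℝ (phaseDiagonal n) w := by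
  refine Subset.antisymm (subset_inter (tangentConeAt_mono inter_subset_left)
    (tangentConeAt_mono inter_subset_right)) ?_
  rw [lambdaPair_inter_phaseDiagonal] at hw ⊢
  obtain ⟨a, ha, rfl⟩ := hw
  rintro ⟨⟨b, p⟩, p', b'⟩ ⟨hX, hY⟩
  obtain ⟨hp, hp'⟩ := tangentConeAt_lambdaPair_subset ha hX
  obtain rfl : p = p' := tangentConeAt_phaseDiagonal_subset rfl hY
  obtain rfl : b = b' := congr($(injective_fderiv_phasePoint ha (hp.symm.trans hp')).2)
  have hU : {v : ℝ × Base n | v.2.2 ≠ 0} ∈ 𝓝 a :=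
    (isOpen_ne_fun (by fun_prop) continuous_const).mem_nhds ha
  refine (hasFDerivAt_psi ha).hasFDerivWithinAt.range_subset_tangentConeAt_image hU
    ⟨(p.1, b), ?_⟩
  simp only [ContinuousLinearMap.prod_apply, ContinuousLinearMap.coe_snd', ← hp]

end Composition

theorem clean_intersection_adjoint_general (n : ℕ) :
    (Set.InjOn (Psi n)
        {v : ℝ × EuclideanSpace ℝ (Fin n) × EuclideanSpace ℝ (Fin n) | v.2.2 ≠ 0} ∧
      ({w : (Base n × Phase n) × (Phase n × Base n) |
          w.1 ∈ LambdaPlusInv n ∧ w.2 ∈ LambdaPlus n} ∩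
        {w : (Base n × Phase n) × (Phase n × Base n) | w.1.2 = w.2.1})
        = Psi n ''
          {v : ℝ × EuclideanSpace ℝ (Fin n) × EuclideanSpace ℝ (Fin n) | v.2.2 ≠ 0}) ∧
    ∀ w ∈ ({w : (Base n × Phase n) × (Phase n × Base n) |
              w.1 ∈ LambdaPlusInv n ∧ w.2 ∈ LambdaPlus n} ∩
            {w : (Base n × Phase n) × (Phase n × Base n) | w.1.2 = w.2.1}),
      tangentConeAt ℝ
          ({w : (Base n × Phase n) × (Phase n × Base n) |
              w.1 ∈ LambdaPlusInv n ∧ w.2 ∈ LambdaPlus n} ∩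
           {w : (Base n × Phase n) × (Phase n × Base n) | w.1.2 = w.2.1}) w
        = tangentConeAt ℝ
            {w : (Base n × Phase n) × (Phase n × Base n) |
              w.1 ∈ LambdaPlusInv n ∧ w.2 ∈ LambdaPlus n} w ∩
          tangentConeAt ℝ
            {w : (Base n × Phase n) × (Phase n × Base n) | w.1.2 = w.2.1} w :=
  ⟨⟨psi_injective.injOn, lambdaPair_inter_phaseDiagonal⟩,
    fun _ hw ↦ tangentConeAt_lambdaPair_inter_phaseDiagonal hw⟩

/-- Clean intersection computation for the composition `E₊* ∘ (N ∘ E₊)`: the fiber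
`𝒳 ∩ 𝒴` is the image of the injective map `Ψ`, and at every point the tangent cone of
the intersection is the intersection of the tangent cones. -/
theorem clean_intersection_adjoint (n : ℕ) (hn : 2 ≤ n) :
    (Set.InjOn (Psi n)
        {v : ℝ × EuclideanSpace ℝ (Fin n) × EuclideanSpace ℝ (Fin n) | v.2.2 ≠ 0} ∧
      ({w : (Base n × Phase n) × (Phase n × Base n) |
          w.1 ∈ LambdaPlusInv n ∧ w.2 ∈ LambdaPlus n} ∩
        {w : (Base n × Phase n) × (Phase n × Base n) | w.1.2 = w.2.1})
        = Psi n ''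
          {v : ℝ × EuclideanSpace ℝ (Fin n) × EuclideanSpace ℝ (Fin n) | v.2.2 ≠ 0}) ∧
    ∀ w ∈ ({w : (Base n × Phase n) × (Phase n × Base n) |
              w.1 ∈ LambdaPlusInv n ∧ w.2 ∈ LambdaPlus n} ∩
            {w : (Base n × Phase n) × (Phase n × Base n) | w.1.2 = w.2.1}),
      tangentConeAt ℝ
          ({w : (Base n × Phase n) × (Phase n × Base n) |
              w.1 ∈ LambdaPlusInv n ∧ w.2 ∈ LambdaPlus n} ∩
           {w : (Base n × Phase n) × (Phase n × Base n) | w.1.2 = w.2.1}) w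
        = tangentConeAt ℝ
            {w : (Base n × Phase n) × (Phase n × Base n) |
              w.1 ∈ LambdaPlusInv n ∧ w.2 ∈ LambdaPlus n} w ∩
          tangentConeAt ℝ
            {w : (Base n × Phase n) × (Phase n × Base n) | w.1.2 = w.2.1} w :=
  clean_intersection_adjoint_general n
end
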